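/- arXiv:2108.04598 — 3 statements merged into one kernel-verified Lean document; each statement's English description precedes it below -/
import Mathlib

section
/- Let ρ : ℝ → (0,∞) be a C² probability density with ρ even, ρ|_{[0,∞)} decreasing, and ρ'' ∈ L¹(ℝ). Then there exists M > 1 such that for every s > 0, every Λ : ℝ → [0,∞) with the symmetric decay property, and every v with |v| ≤ 1: |∫_{-s}^{s} ρ''(u+v) Λ(u) du| ≤ M ∫_{-s}^{s} ρ(u) Λ(u) du. -/
open MeasureTheory

def SymDecay (f : ℝ → ℝ) : Prop :=
  (∀ x, f (-x) = f x) ∧ AntitoneOn f (Set.Ici 0)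

/-!
On a fixed window `|u| ≤ 1` the shifted second derivative is dominated pointwise by a multiple
of `ρ`, by continuity and positivity on a compact set. Outside the window the weight `Λ` is at
most `Λ 1`, and `Λ 1 * ∫_{-1}^{1} ρ ≤ ∫_{-1}^{1} ρ Λ` because `Λ` is largest near the origin, so
the contribution of the tails is bounded by `‖ρ''‖₁ / ∫_{-1}^{1} ρ` times `∫_{-s}^{s} ρ Λ`.
-/

namespace SymDecay

variable {Λ : ℝ → ℝ}

theorem apply_abs (hΛ : SymDecay Λ) (x : ℝ) : Λ |x| = Λ x := by
  rcases abs_choice x with h | h <;> rw [h]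
  exact hΛ.1 x

theorem le_of_abs_le (hΛ : SymDecay Λ) {x y : ℝ} (h : |x| ≤ |y|) : Λ y ≤ Λ x := by
  rw [← hΛ.apply_abs x, ← hΛ.apply_abs y]
  exact hΛ.2 (abs_nonneg x) (abs_nonneg y) h

theorem measurable (hΛ : SymDecay Λ) : Measurable Λ := by
  have hanti : Antitone fun x => Λ (max x 0) := fun x y hxy =>
    hΛ.2 (le_max_right x 0) (le_max_right y 0) (max_le_max hxy le_rfl)
  have hcomp : (fun x => Λ (max |x| 0)) = Λ := by
    funext x
    rw [max_eq_left (abs_nonneg x), hΛ.apply_abs]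
  exact hcomp ▸ hanti.measurable.comp measurable_abs

theorem intervalIntegrable_mul (hΛ : SymDecay Λ) (hΛ0 : ∀ x, 0 ≤ Λ x) {f : ℝ → ℝ} {a b : ℝ}
    (hf : IntervalIntegrable f volume a b) :
    IntervalIntegrable (fun u => f u * Λ u) volume a b := by
  have hbound : ∀ᵐ x ∂(volume : Measure ℝ), ‖Λ x‖ ≤ Λ 0 := ae_of_all _ fun x => by
    rw [Real.norm_eq_abs, abs_of_nonneg (hΛ0 x)]
    exact hΛ.le_of_abs_le (by simp)
  exact ⟨hf.1.mul_bdd hΛ.measurable.aestronglyMeasurable (ae_restrict_of_ae hbound),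
    hf.2.mul_bdd hΛ.measurable.aestronglyMeasurable (ae_restrict_of_ae hbound)⟩

theorem mul_intervalIntegral_le (hΛ : SymDecay Λ) (hΛ0 : ∀ x, 0 ≤ Λ x) {ρ : ℝ → ℝ}
    (hρ : Continuous ρ) (hρ0 : ∀ x, 0 ≤ ρ x) {c : ℝ} (hc : 0 ≤ c) :
    Λ c * ∫ u in (-c)..c, ρ u ≤ ∫ u in (-c)..c, ρ u * Λ u := by
  rw [← intervalIntegral.integral_const_mul]
  refine intervalIntegral.integral_mono_on (by linarith) (hρ.intervalIntegrable _ _ |>.const_mul _)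
    (hΛ.intervalIntegrable_mul hΛ0 (hρ.intervalIntegrable _ _)) fun u hu => ?_
  rw [mul_comm]
  refine mul_le_mul_of_nonneg_left (hΛ.le_of_abs_le ?_) (hρ0 u)
  rw [abs_of_nonneg hc]
  exact abs_le.mpr hu

end SymDecay

theorem exists_abs_comp_add_le_mul {g ρ : ℝ → ℝ} (hg : Continuous g) (hρ : Continuous ρ)
    (hρpos : ∀ x, 0 < ρ x) (c r : ℝ) :
    ∃ C, 0 ≤ C ∧ ∀ u v, |u| ≤ c → |v| ≤ r → |g (u + v)| ≤ C * ρ u := by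
  have hratio : Continuous fun p : ℝ × ℝ => g (p.1 + p.2) / ρ p.1 :=
    (hg.comp continuous_add).div (hρ.comp continuous_fst) fun p => (hρpos p.1).ne'
  obtain ⟨C, hC⟩ := (isCompact_Icc.prod isCompact_Icc).exists_bound_of_continuousOn
    (s := Set.Icc (-c) c ×ˢ Set.Icc (-r) r) hratio.continuousOn
  refine ⟨max C 0, le_max_right _ _, fun u v hu hv => ?_⟩
  have hbound := hC (u, v) ⟨abs_le.mp hu, abs_le.mp hv⟩
  rw [norm_div, Real.norm_eq_abs, Real.norm_eq_abs, abs_of_pos (hρpos u),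
    div_le_iff₀ (hρpos u)] at hbound
  exact hbound.trans (mul_le_mul_of_nonneg_right (le_max_left _ _) (hρpos u).le)

theorem abs_intervalIntegral_mul_le_of_symDecay {f ρ Λ : ℝ → ℝ} {c C s : ℝ} (hc : 0 < c)
    (hs : 0 ≤ s) (hf : Integrable f) (hρ : Continuous ρ) (hρpos : ∀ x, 0 < ρ x) (hC : 0 ≤ C)
    (hfρ : ∀ u, |u| ≤ c → |f u| ≤ C * ρ u) (hΛ : SymDecay Λ) (hΛ0 : ∀ x, 0 ≤ Λ x) :
    |∫ u in (-s)..s, f u * Λ u| ≤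
      (C + (∫ u, |f u|) / ∫ u in (-c)..c, ρ u) * ∫ u in (-s)..s, ρ u * Λ u := by
  set R := ∫ u in (-s)..s, ρ u * Λ u
  set m := ∫ u in (-c)..c, ρ u
  set K := ∫ u, |f u|
  have hρΛ : ∀ a b, IntervalIntegrable (fun u => ρ u * Λ u) volume a b := fun a b =>
    hΛ.intervalIntegrable_mul hΛ0 (hρ.intervalIntegrable a b)
  have hfΛ : IntervalIntegrable (fun u => |f u| * Λ u) volume (-s) s :=
    hΛ.intervalIntegrable_mul hΛ0 hf.abs.intervalIntegrable
  have hR : 0 ≤ R := intervalIntegral.integral_nonneg (by linarith)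
    fun u _ => mul_nonneg (hρpos u).le (hΛ0 u)
  have hm : 0 < m := intervalIntegral.intervalIntegral_pos_of_pos_on (hρ.intervalIntegrable _ _)
    (fun x _ => hρpos x) (by linarith)
  have hwindow : ∀ u, |u| ≤ c → |f u| * Λ u ≤ C * (ρ u * Λ u) := fun u hu => by
    rw [← mul_assoc]
    exact mul_le_mul_of_nonneg_right (hfρ u hu) (hΛ0 u)
  have habs : |∫ u in (-s)..s, f u * Λ u| ≤ ∫ u in (-s)..s, |f u| * Λ u := by
    refine (intervalIntegral.abs_integral_le_integral_abs (by linarith)).trans_eq ?_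
    simp only [abs_mul, abs_of_nonneg (hΛ0 _)]
  rcases le_or_gt s c with hsc | hcs
  · calc |∫ u in (-s)..s, f u * Λ u|
        ≤ ∫ u in (-s)..s, C * (ρ u * Λ u) :=
          habs.trans <| intervalIntegral.integral_mono_on (by linarith) hfΛ
            ((hρΛ _ _).const_mul C) fun u hu =>
              hwindow u (abs_le.mpr ⟨by linarith [hu.1], by linarith [hu.2]⟩)
      _ = C * R := intervalIntegral.integral_const_mul _ _
      _ ≤ (C + K / m) * R := by
          have : 0 ≤ K / m * R := by positivity
          linarith
  · have hΛc : Λ c * m ≤ R :=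
      (hΛ.mul_intervalIntegral_le hΛ0 hρ (fun x => (hρpos x).le) hc.le).trans <|
        intervalIntegral.integral_mono_interval (by linarith) (by linarith) hcs.le
          (ae_of_all _ fun u => mul_nonneg (hρpos u).le (hΛ0 u)) (hρΛ _ _)
    have hsplit : ∀ u, |f u| * Λ u ≤ C * (ρ u * Λ u) + Λ c * |f u| := fun u => by
      rcases le_or_gt |u| c with hu | hu
      · linarith [hwindow u hu, mul_nonneg (hΛ0 c) (abs_nonneg (f u))]
      · have : |f u| * Λ u ≤ Λ c * |f u| := by
          rw [mul_comm]
          refine mul_le_mul_of_nonneg_right (hΛ.le_of_abs_le ?_) (abs_nonneg _)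
          rw [abs_of_pos hc]
          exact hu.le
        linarith [mul_nonneg hC (mul_nonneg (hρpos u).le (hΛ0 u))]
    have hfK : ∫ u in (-s)..s, |f u| ≤ K := by
      rw [intervalIntegral.integral_of_le (by linarith)]
      exact setIntegral_le_integral hf.abs (ae_of_all _ fun u => abs_nonneg _)
    calc |∫ u in (-s)..s, f u * Λ u|
        ≤ ∫ u in (-s)..s, (C * (ρ u * Λ u) + Λ c * |f u|) :=
          habs.trans <| intervalIntegral.integral_mono_on (by linarith) hfΛ
            (((hρΛ _ _).const_mul C).add (hf.abs.intervalIntegrable.const_mul _))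
            fun u _ => hsplit u
      _ = C * R + Λ c * ∫ u in (-s)..s, |f u| := by
          rw [intervalIntegral.integral_add ((hρΛ _ _).const_mul C)
            (hf.abs.intervalIntegrable.const_mul _), intervalIntegral.integral_const_mul,
            intervalIntegral.integral_const_mul]
      _ ≤ C * R + R / m * K := by
          have := mul_le_mul ((le_div_iff₀ hm).mpr hΛc) hfK
            (intervalIntegral.integral_nonneg (by linarith) fun u _ => abs_nonneg _)
            (div_nonneg hR hm.le)
          linarith
      _ = (C + K / m) * R := by ring

theorem stmt9_general (ρ : ℝ → ℝ) (hρpos : ∀ x, 0 < ρ x) (hρC2 : ContDiff ℝ 2 ρ)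
    (hρ'' : Integrable (deriv (deriv ρ))) :
    ∃ M : ℝ, 1 < M ∧ ∀ s : ℝ, 0 < s → ∀ Λ : ℝ → ℝ, (∀ x, 0 ≤ Λ x) → SymDecay Λ →
      ∀ v : ℝ, |v| ≤ 1 →
        |∫ u in (-s)..s, deriv (deriv ρ) (u + v) * Λ u| ≤
          M * ∫ u in (-s)..s, ρ u * Λ u := by
  have hg : Continuous (deriv (deriv ρ)) := (hρC2.deriv' (n := 1)).continuous_deriv le_rfl
  obtain ⟨C, hC, hCρ⟩ := exists_abs_comp_add_le_mul hg hρC2.continuous hρpos 1 1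
  set m := ∫ u in (-1)..1, ρ u
  set K := ∫ u, |deriv (deriv ρ) u|
  refine ⟨max (C + K / m) 2, lt_max_of_lt_right one_lt_two, fun s hs Λ hΛ0 hΛ v hv => ?_⟩
  have hshift : ∫ u, |deriv (deriv ρ) (u + v)| = K :=
    integral_add_right_eq_self (fun x => |deriv (deriv ρ) x|) v
  calc |∫ u in (-s)..s, deriv (deriv ρ) (u + v) * Λ u|
      ≤ (C + K / m) * ∫ u in (-s)..s, ρ u * Λ u := by
        simpa only [hshift] using abs_intervalIntegral_mul_le_of_symDecay one_pos hs.le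
          (hρ''.comp_add_right v) hρC2.continuous hρpos hC (fun u hu => hCρ u v hu hv) hΛ hΛ0
    _ ≤ max (C + K / m) 2 * ∫ u in (-s)..s, ρ u * Λ u :=
        mul_le_mul_of_nonneg_right (le_max_left _ _) <|
          intervalIntegral.integral_nonneg (by linarith) fun u _ => mul_nonneg (hρpos u).le (hΛ0 u)

/-- For a `C²` symmetric positive probability density `ρ` with integrable second
derivative, there is `M > 1` bounding shifted second-derivative correlations
against density correlations, uniformly over symmetric decaying weights `Λ`,
radii `s > 0` and shifts `|v| ≤ 1`. -/
theorem stmt9 (ρ : ℝ → ℝ) (hρpos : ∀ x, 0 < ρ x) (hρC2 : ContDiff ℝ 2 ρ)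
    (hρeven : ∀ x, ρ (-x) = ρ x) (hρdec : AntitoneOn ρ (Set.Ici 0))
    (hρprob : ∫ x, ρ x = 1) (hρint : Integrable ρ)
    (hρ'' : Integrable (deriv (deriv ρ))) :
    ∃ M : ℝ, 1 < M ∧ ∀ s : ℝ, 0 < s → ∀ Λ : ℝ → ℝ, (∀ x, 0 ≤ Λ x) → SymDecay Λ →
      ∀ v : ℝ, |v| ≤ 1 →
        |∫ u in (-s)..s, deriv (deriv ρ) (u + v) * Λ u| ≤
          M * ∫ u in (-s)..s, ρ u * Λ u :=
  stmt9_general ρ hρpos hρC2 hρ''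
end

section
/- For 1 ≤ p ≤ 2 and all real u, v: 2(|u|^p + |v|^p) ≥ |u+v|^p + |u-v|^p. -/
/-!
Put `q = p / 2 ∈ [0, 1]`, so that `|a| ^ p = (a ^ 2) ^ q` and `t ↦ t ^ q` is concave and
subadditive on `[0, ∞)`. Midpoint concavity together with the parallelogram law
`(u + v) ^ 2 + (u - v) ^ 2 = 2 * (u ^ 2 + v ^ 2)` bounds the left side by `2 * (u ^ 2 + v ^ 2) ^ q`,
and subadditivity splits this into `2 * ((u ^ 2) ^ q + (v ^ 2) ^ q)`.
-/

theorem Real.rpow_add_rpow_le_two_mul_mean_rpow {q x y : ℝ} (hq₀ : 0 ≤ q) (hq₁ : q ≤ 1)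
    (hx : 0 ≤ x) (hy : 0 ≤ y) : x ^ q + y ^ q ≤ 2 * ((x + y) / 2) ^ q := by
  have h := (Real.concaveOn_rpow hq₀ hq₁).2 (Set.mem_Ici.2 hx) (Set.mem_Ici.2 hy)
    (by norm_num : (0 : ℝ) ≤ 1 / 2) (by norm_num : (0 : ℝ) ≤ 1 / 2) (by norm_num)
  simp only [smul_eq_mul] at h
  rw [show 1 / 2 * x + 1 / 2 * y = (x + y) / 2 by ring] at h
  linarith

theorem Real.abs_rpow_eq_sq_rpow_half (a p : ℝ) : |a| ^ p = (a ^ 2) ^ (p / 2) := by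
  rw [← sq_abs, ← Real.rpow_natCast_mul (abs_nonneg a)]
  norm_num [mul_div_cancel₀]

/-- Parallelogram-type inequality for `1 ≤ p ≤ 2`. -/
theorem stmt12 (p : ℝ) (hp : 1 ≤ p) (hp2 : p ≤ 2) (u v : ℝ) :
    |u + v| ^ p + |u - v| ^ p ≤ 2 * (|u| ^ p + |v| ^ p) := by
  have hq₀ : 0 ≤ p / 2 := by linarith
  have hq₁ : p / 2 ≤ 1 := by linarith
  simp only [Real.abs_rpow_eq_sq_rpow_half _ p]
  calc ((u + v) ^ 2) ^ (p / 2) + ((u - v) ^ 2) ^ (p / 2)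
      ≤ 2 * (((u + v) ^ 2 + (u - v) ^ 2) / 2) ^ (p / 2) :=
        Real.rpow_add_rpow_le_two_mul_mean_rpow hq₀ hq₁ (sq_nonneg _) (sq_nonneg _)
    _ = 2 * (u ^ 2 + v ^ 2) ^ (p / 2) := by congr 3; ring
    _ ≤ 2 * ((u ^ 2) ^ (p / 2) + (v ^ 2) ^ (p / 2)) := by
        gcongr
        exact Real.rpow_add_le_add_rpow (sq_nonneg _) (sq_nonneg _) hq₀ hq₁
end

section
/- Let 1 ≤ p ≤ 2, s > 0, let Λ : ℝ → [0,∞) be an even function, and v ∈ ℝ. Then ∫_{-s}^{s} e^{-|u+v|^p} Λ(u) du ≥ e^{-|v|^p} ∫_{-s}^{s} e^{-|u|^p} Λ(u) du. -/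
/-!
Substituting `u ↦ -u` and using that `Λ` is even, the right-hand side is the average of the
integrals of `e^{-|u+v|^p} Λ(u)` and `e^{-|u-v|^p} Λ(u)`. Pointwise, convexity of `exp` gives
`e^{-a} + e^{-b} ≥ 2 e^{-(a+b)/2}`, and the Clarkson-type inequality
`|u+v|^p + |u-v|^p ≤ 2 (|u|^p + |v|^p)` for `1 ≤ p ≤ 2` turns this into
`e^{-|u+v|^p} + e^{-|u-v|^p} ≥ 2 e^{-|u|^p - |v|^p}`.
If `Λ` is not interval integrable, neither integrand is, and both integrals are the junk value `0`.
-/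

open Real MeasureTheory intervalIntegral

lemma abs_add_rpow_add_abs_sub_rpow_le {p : ℝ} (hp : 1 ≤ p) (hp2 : p ≤ 2) (u v : ℝ) :
    |u + v| ^ p + |u - v| ^ p ≤ 2 * (|u| ^ p + |v| ^ p) := by
  have hq0 : 0 ≤ p / 2 := by positivity
  have hq1 : p / 2 ≤ 1 := by linarith
  -- with `q = p / 2 ∈ [1/2, 1]`, `t ↦ t ^ q` is concave and subadditive on `[0, ∞)`
  have hsq (x : ℝ) : |x| ^ p = (x ^ 2) ^ (p / 2) := by
    rw [← sq_abs, ← rpow_natCast, ← rpow_mul (abs_nonneg x), Nat.cast_ofNat,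
      mul_div_cancel₀ p two_ne_zero]
  have hmid := (concaveOn_rpow hq0 hq1).2 (sq_nonneg (u + v)) (sq_nonneg (u - v))
    (by norm_num : (0 : ℝ) ≤ 1 / 2) (by norm_num : (0 : ℝ) ≤ 1 / 2) (by norm_num)
  have hpar : (1 / 2 : ℝ) • (u + v) ^ 2 + (1 / 2 : ℝ) • (u - v) ^ 2 = u ^ 2 + v ^ 2 := by
    simp only [smul_eq_mul]; ring
  rw [hpar, smul_eq_mul, smul_eq_mul] at hmid
  have hsub := rpow_add_le_add_rpow (sq_nonneg u) (sq_nonneg v) hq0 hq1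
  rw [hsq, hsq, hsq u, hsq v]
  linarith

lemma two_mul_exp_midpoint_le (x y : ℝ) : 2 * exp ((x + y) / 2) ≤ exp x + exp y := by
  have h := convexOn_exp.2 (Set.mem_univ x) (Set.mem_univ y)
    (by norm_num : (0 : ℝ) ≤ 1 / 2) (by norm_num : (0 : ℝ) ≤ 1 / 2) (by norm_num)
  rw [smul_eq_mul, smul_eq_mul, smul_eq_mul, smul_eq_mul, ← mul_add, ← mul_add,
    one_div_mul_eq_div, one_div_mul_eq_div] at h
  linarith

lemma two_mul_exp_neg_rpow_le {p : ℝ} (hp : 1 ≤ p) (hp2 : p ≤ 2) (u v : ℝ) :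
    2 * exp (-(|u| ^ p + |v| ^ p)) ≤ exp (-|u + v| ^ p) + exp (-|u - v| ^ p) := by
  calc 2 * exp (-(|u| ^ p + |v| ^ p))
      ≤ 2 * exp ((-|u + v| ^ p + -|u - v| ^ p) / 2) := by
        gcongr
        linarith [abs_add_rpow_add_abs_sub_rpow_le hp hp2 u v]
    _ ≤ exp (-|u + v| ^ p) + exp (-|u - v| ^ p) := two_mul_exp_midpoint_le _ _

lemma continuous_exp_neg_abs_add_rpow {p : ℝ} (hp : 0 ≤ p) (c : ℝ) :
    Continuous fun u : ℝ => exp (-|u + c| ^ p) :=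
  (((continuous_id.add continuous_const).abs.rpow_const fun _ => Or.inr hp).neg).rexp

lemma IntervalIntegrable.of_mul_continuous {f g : ℝ → ℝ} {μ : Measure ℝ}
    [IsLocallyFiniteMeasure μ] {a b : ℝ} (hg : Continuous g) (hg0 : ∀ x, g x ≠ 0)
    (h : IntervalIntegrable (fun x => g x * f x) μ a b) : IntervalIntegrable f μ a b := by
  convert h.continuousOn_mul (hg.inv₀ hg0).continuousOn using 1
  funext x
  simp [hg0 x]

lemma integral_comp_neg_mul_of_even {F Λ : ℝ → ℝ} (hΛ : ∀ x, Λ (-x) = Λ x) (s : ℝ) :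
    ∫ u in (-s)..s, F (-u) * Λ u = ∫ u in (-s)..s, F u * Λ u := by
  simpa only [neg_neg, hΛ] using integral_comp_neg (a := -s) (b := s) fun u => F u * Λ u

lemma integral_mul_le_of_two_mul_le_add_comp_neg {F G Λ : ℝ → ℝ} {s : ℝ} (hs : 0 ≤ s)
    (hΛ : IntervalIntegrable Λ volume (-s) s) (hΛ0 : ∀ x, 0 ≤ Λ x) (hΛeven : ∀ x, Λ (-x) = Λ x)
    (hF : Continuous F) (hG : Continuous G) (hFG : ∀ u, 2 * G u ≤ F u + F (-u)) :
    ∫ u in (-s)..s, G u * Λ u ≤ ∫ u in (-s)..s, F u * Λ u := by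
  have hint {H : ℝ → ℝ} (hH : Continuous H) :
      IntervalIntegrable (fun u => H u * Λ u) volume (-s) s := by
    simpa only [mul_comm] using hΛ.continuousOn_mul hH.continuousOn
  have hFneg : IntervalIntegrable (fun u => F (-u) * Λ u) volume (-s) s :=
    hint (hF.comp continuous_neg)
  have hmono : ∫ u in (-s)..s, 2 * G u * Λ u ≤ ∫ u in (-s)..s, F u * Λ u + F (-u) * Λ u :=
    integral_mono_on (by linarith) (hint (continuous_const.mul hG))
      ((hint hF).add hFneg) fun u _ => by
        rw [← add_mul]; exact mul_le_mul_of_nonneg_right (hFG u) (hΛ0 u)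
  rw [integral_add (hint hF) hFneg, integral_comp_neg_mul_of_even hΛeven] at hmono
  simp only [mul_assoc, intervalIntegral.integral_const_mul] at hmono
  linarith

/-- Shift inequality for the Besov-type density `e^{-|·|^p}`, `1 ≤ p ≤ 2`,
against an even nonnegative weight `Λ`. -/
theorem stmt14 (p : ℝ) (hp : 1 ≤ p) (hp2 : p ≤ 2) (s : ℝ) (hs : 0 < s)
    (Λ : ℝ → ℝ) (hΛ0 : ∀ x, 0 ≤ Λ x) (hΛeven : ∀ x, Λ (-x) = Λ x) (v : ℝ) :
    Real.exp (-|v| ^ p) * ∫ u in (-s)..s, Real.exp (-|u| ^ p) * Λ u ≤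
      ∫ u in (-s)..s, Real.exp (-|u + v| ^ p) * Λ u := by
  have hcont := continuous_exp_neg_abs_add_rpow (by linarith : (0 : ℝ) ≤ p)
  by_cases hΛ : IntervalIntegrable Λ volume (-s) s
  · rw [← intervalIntegral.integral_const_mul]
    simp only [← mul_assoc]
    refine integral_mul_le_of_two_mul_le_add_comp_neg hs.le hΛ hΛ0 hΛeven (hcont v)
      (continuous_const.mul (by simpa using hcont 0)) fun u => ?_
    rw [← exp_add, ← neg_add, neg_add_eq_sub, abs_sub_comm, add_comm (|v| ^ p)]
    exact two_mul_exp_neg_rpow_le hp hp2 u v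
  · have hundef (c : ℝ) :
        ¬ IntervalIntegrable (fun u => exp (-|u + c| ^ p) * Λ u) volume (-s) s := fun h =>
      hΛ (h.of_mul_continuous (hcont c) fun _ => (exp_pos _).ne')
    rw [integral_undef (hundef v), integral_undef (by simpa using hundef 0), mul_zero]
end
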